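/- arXiv:1811.03986 — 3 statements merged into one kernel-verified Lean document; each statement's English description precedes it below -/
import Mathlib

section
/- Let A ∈ ℝ^{n×n}, b ∈ ℝ^n, c ∈ ℝ^{1×n}, and define g(t) = c e^{At} b. Then for all t ∈ ℝ, g'(t)² − g(t)·g''(t) = (c ⊗ c) e^{(A ⊕ A)t} (Ab ⊗ Ab − b ⊗ A²b). In particular, g'(t)² − g(t)·g''(t) is the impulse response of the state-space model (Ā, b̄, c̄) with Ā = A ⊕ A, b̄ = Ab ⊗ Ab − b ⊗ A²b, c̄ = c ⊗ c. -/
/-!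
`A ⊗ 1` and `1 ⊗ A` commute, so `e^{(A ⊕ A)t} = e^{At} ⊗ e^{At}`, and hence
`(c ⊗ c) e^{(A ⊕ A)t} (u ⊗ v) = (c e^{At} u)(c e^{At} v)`. Since `g' = c e^{At} A b` and
`g'' = c e^{At} A² b`, the right-hand side is `g'² − g g''`.
-/

open Matrix Kronecker

/-- Kronecker sum of two square matrices: `X ⊕ Y = X ⊗ I + I ⊗ Y`. -/
noncomputable def kroneckerSum {n m : ℕ} (X : Matrix (Fin n) (Fin n) ℝ)
    (Y : Matrix (Fin m) (Fin m) ℝ) : Matrix (Fin n × Fin m) (Fin n × Fin m) ℝ :=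
  X ⊗ₖ (1 : Matrix (Fin m) (Fin m) ℝ) + (1 : Matrix (Fin n) (Fin n) ℝ) ⊗ₖ Y

open NormedSpace

theorem Continuous.matrix_kronecker {X l m n p α : Type*} [TopologicalSpace X]
    [TopologicalSpace α] [Mul α] [ContinuousMul α] {A : X → Matrix l m α}
    {B : X → Matrix n p α} (hA : Continuous A) (hB : Continuous B) :
    Continuous fun x => A x ⊗ₖ B x :=
  continuous_matrix fun _ _ => (hA.matrix_elem _ _).mul (hB.matrix_elem _ _)

namespace Matrix

variable {m n : Type*} [Fintype m] [DecidableEq m] [Fintype n] [DecidableEq n]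
variable (R : Type*) [CommRing R]

def kroneckerOneRingHom : Matrix m m R →+* Matrix (m × n) (m × n) R where
  toFun X := X ⊗ₖ 1
  map_one' := one_kronecker_one
  map_mul' X Y := by rw [← mul_kronecker_mul, one_mul]
  map_zero' := zero_kronecker 1
  map_add' X Y := add_kronecker X Y 1

def oneKroneckerRingHom : Matrix n n R →+* Matrix (m × n) (m × n) R where
  toFun Y := 1 ⊗ₖ Y
  map_one' := one_kronecker_one
  map_mul' X Y := by rw [← mul_kronecker_mul, one_mul]
  map_zero' := kronecker_zero 1
  map_add' X Y := kronecker_add 1 X Y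

end Matrix

theorem smul_kroneckerSum {n m : ℕ} (t : ℝ) (X : Matrix (Fin n) (Fin n) ℝ)
    (Y : Matrix (Fin m) (Fin m) ℝ) :
    t • kroneckerSum X Y = kroneckerSum (t • X) (t • Y) := by
  rw [kroneckerSum, kroneckerSum, smul_add, smul_kronecker, kronecker_smul]

section Exponential

attribute [local instance] Matrix.linftyOpNormedRing Matrix.linftyOpNormedAlgebra

namespace Matrix

variable {l m n p : Type*} [Fintype m] [DecidableEq m] [Fintype n] [DecidableEq n]

theorem exp_kronecker_one (X : Matrix m m ℝ) :
    exp (X ⊗ₖ (1 : Matrix n n ℝ)) = exp X ⊗ₖ (1 : Matrix n n ℝ) :=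
  (map_exp (kroneckerOneRingHom (n := n) ℝ)
    (by exact continuous_id.matrix_kronecker continuous_const) X).symm

theorem exp_one_kronecker (Y : Matrix n n ℝ) :
    exp ((1 : Matrix m m ℝ) ⊗ₖ Y) = (1 : Matrix m m ℝ) ⊗ₖ exp Y :=
  (map_exp (oneKroneckerRingHom (m := m) ℝ)
    (by exact continuous_const.matrix_kronecker continuous_id) Y).symm

theorem hasDerivAt_mul_exp_smul_mul_apply (A : Matrix m m ℝ) (c : Matrix l m ℝ)
    (b : Matrix m p ℝ) (i : l) (j : p) (t : ℝ) :
    HasDerivAt (fun s : ℝ => (c * exp (s • A) * b) i j)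
      ((c * exp (t • A) * (A * b)) i j) t := by
  let L : Matrix m m ℝ →ₗ[ℝ] ℝ :=
    entryLinearMap ℝ ℝ i j ∘ₗ mulRightLinearMap l ℝ b ∘ₗ mulLeftLinearMap m ℝ c
  refine (L.toContinuousLinearMap.hasFDerivAt.comp_hasDerivAt t
    (hasDerivAt_exp_smul_const A t)).congr_deriv ?_
  change (c * (exp (t • A) * A) * b) i j = _
  simp only [Matrix.mul_assoc]

end Matrix

theorem exp_kroneckerSum {n m : ℕ} (X : Matrix (Fin n) (Fin n) ℝ)
    (Y : Matrix (Fin m) (Fin m) ℝ) :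
    exp (kroneckerSum X Y) = exp X ⊗ₖ exp Y := by
  have hcomm : Commute (X ⊗ₖ (1 : Matrix (Fin m) (Fin m) ℝ))
      ((1 : Matrix (Fin n) (Fin n) ℝ) ⊗ₖ Y) := by
    simp [Commute, SemiconjBy, ← mul_kronecker_mul]
  rw [kroneckerSum, Matrix.exp_add_of_commute _ _ hcomm, exp_kronecker_one, exp_one_kronecker,
    ← mul_kronecker_mul, mul_one, one_mul]

end Exponential

/-- State-space characterization of the log-concavity test: for
`g(t) = c e^{At} b`, the function `g'(t)² − g(t)·g''(t)` is the impulse response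
of the compound state-space model `(A ⊕ A, Ab ⊗ Ab − b ⊗ A²b, c ⊗ c)`. -/
theorem test_function_state_space {n : ℕ}
    (A : Matrix (Fin n) (Fin n) ℝ) (b : Matrix (Fin n) (Fin 1) ℝ)
    (c : Matrix (Fin 1) (Fin n) ℝ) :
    let g : ℝ → ℝ := fun t => (c * NormedSpace.exp (t • A) * b) 0 0
    ∀ t : ℝ,
      deriv g t ^ 2 - g t * deriv (deriv g) t =
        ((c ⊗ₖ c) * NormedSpace.exp (t • kroneckerSum A A) *
          ((A * b) ⊗ₖ (A * b) - b ⊗ₖ (A * A * b))) (0, 0) (0, 0) := by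
  intro g t
  have hg' : deriv g = fun s => (c * exp (s • A) * (A * b)) 0 0 :=
    funext fun s => (hasDerivAt_mul_exp_smul_mul_apply A c b 0 0 s).deriv
  have hg'' : deriv (deriv g) t = (c * exp (t • A) * (A * A * b)) 0 0 := by
    rw [hg', Matrix.mul_assoc A]
    exact (hasDerivAt_mul_exp_smul_mul_apply A c (A * b) 0 0 t).deriv
  rw [hg'', hg', smul_kroneckerSum, exp_kroneckerSum, Matrix.mul_sub, ← mul_kronecker_mul,
    ← mul_kronecker_mul, ← mul_kronecker_mul]
  simp only [g, Matrix.sub_apply, kroneckerMap_apply]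
  ring
end

section
/- Let g : ℝ → ℝ be integrable and log-concave on ℝ, let u : ℝ → ℝ be nonnegative, bounded, measurable and quasiconcave, and let f : ℝ → ℝ be monotonically nondecreasing. Then the function t ↦ f((g ∗ u)(t)) is quasiconcave. -/
open MeasureTheory

/-- The convolution `(g ∗ u)(t) = ∫ g(t − τ) u(τ) dτ`. -/
noncomputable def conv (g u : ℝ → ℝ) (t : ℝ) : ℝ :=
  ∫ τ : ℝ, g (t - τ) * u τ

/-- `f` is log-concave on a set `S`. -/
def LogConcaveOn (S : Set ℝ) (f : ℝ → ℝ) : Prop :=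
  (∀ x ∈ S, 0 ≤ f x) ∧
    ∀ x ∈ S, ∀ y ∈ S, ∀ l : ℝ, 0 ≤ l → l ≤ 1 →
      f x ^ l * f y ^ (1 - l) ≤ f (l * x + (1 - l) * y)

/-- `f` is quasiconcave (unimodal): `f(λx + (1−λ)y) ≥ min(f(x), f(y))`. -/
def Quasiconcave (f : ℝ → ℝ) : Prop :=
  ∀ x y : ℝ, ∀ l : ℝ, 0 ≤ l → l ≤ 1 → min (f x) (f y) ≤ f (l * x + (1 - l) * y)

/-!
Write `h = g ∗ u`. For `δ > 0` the increment `h (· + δ) - h` is `g ∗ (u (· + δ) - u)`, and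
since `u` is unimodal, `u (· + δ) - u` is nonnegative to the left of some point and nonpositive
to the right of it. A log-concave `g` is a totally positive kernel of order two
(`g a * g d ≤ g b * g c` whenever `a ≤ b ≤ d` and `a + d = b + c`), so convolution with it
creates no new sign changes: every increment of `h` changes sign at most once, from `+` to `-`.
As `h` is continuous (`g ∈ L¹`, `u ∈ L^∞`), this forces `h` to be unimodal, and a monotone `f`
preserves unimodality.
-/

open Set

lemma quasiconcave_iff_min_le_of_le_of_le {h : ℝ → ℝ} :
    Quasiconcave h ↔ ∀ a b c, a ≤ b → b ≤ c → min (h a) (h c) ≤ h b := by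
  constructor
  · intro hh a b c hab hbc
    rcases (hab.trans hbc).eq_or_lt with hac | hac
    · rw [show b = a by linarith]
      exact min_le_left _ _
    · have hca : 0 < c - a := sub_pos.2 hac
      have hl := hh a c ((c - b) / (c - a)) (div_nonneg (sub_nonneg.2 hbc) hca.le)
        ((div_le_one hca).2 (by linarith))
      convert hl using 2
      field_simp
      ring
  · intro hh x y l hl0 hl1
    rcases le_total x y with hxy | hyx
    · exact hh x _ y (by nlinarith) (by nlinarith)
    · rw [min_comm]
      exact hh y _ x (by nlinarith) (by nlinarith)

lemma Quasiconcave.le_add_of_le_of_lt_add {u : ℝ → ℝ} (hu : Quasiconcave u) {δ σ σ' : ℝ}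
    (hδ : 0 ≤ δ) (hσ : σ ≤ σ') (h : u σ' < u (σ' + δ)) : u σ ≤ u (σ + δ) := by
  rw [quasiconcave_iff_min_le_of_le_of_le] at hu
  have h₁ := hu σ (σ + δ) (σ' + δ) (by linarith) (by linarith)
  have h₂ := hu σ σ' (σ' + δ) hσ (by linarith)
  by_contra! h'
  rcases min_choice (u σ) (u (σ' + δ)) with hm | hm <;> rw [hm] at h₁ h₂ <;> linarith

lemma Monotone.comp_quasiconcave {f h : ℝ → ℝ} (hf : Monotone f) (hh : Quasiconcave h) :
    Quasiconcave (f ∘ h) :=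
  fun x y l hl0 hl1 => hf.map_min.symm.trans_le (hf (hh x y l hl0 hl1))

/-- A counterexample `h b < min (h a) (h c)` yields, around the outermost points of
`{w ∈ [a, c] | h w ≤ h b}`, an increment that is negative and later positive. -/
lemma Continuous.quasiconcave_of_increment_nonpos_of_neg {h : ℝ → ℝ} (hc : Continuous h)
    (hinc : ∀ δ, 0 < δ → ∀ s t, s ≤ t → h (s + δ) < h s → h (t + δ) ≤ h t) :
    Quasiconcave h := by
  rw [quasiconcave_iff_min_le_of_le_of_le]
  intro a b c hab hbc
  by_contra! hb
  set S := Icc a c ∩ {w | h w ≤ h b}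
  have hS : IsCompact S := isCompact_Icc.inter_right (isClosed_le hc continuous_const)
  have hbS : b ∈ S := ⟨⟨hab, hbc⟩, le_refl (h b)⟩
  obtain ⟨⟨haL, -⟩, hL⟩ := hS.sInf_mem ⟨b, hbS⟩
  obtain ⟨⟨-, hRc⟩, hR⟩ := hS.sSup_mem ⟨b, hbS⟩
  have hLR : sInf S ≤ sSup S := (csInf_le hS.bddBelow hbS).trans (le_csSup hS.bddAbove hbS)
  have hout : ∀ w ∈ Icc a c, w < sInf S ∨ sSup S < w → h b < h w := by
    intro w hw hw'
    by_contra! hwb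
    rcases hw' with hw' | hw'
    · exact hw'.not_ge (csInf_le hS.bddBelow ⟨hw, hwb⟩)
    · exact hw'.not_ge (le_csSup hS.bddAbove ⟨hw, hwb⟩)
  have haL' : a < sInf S := haL.lt_of_ne fun h' => by
    have := h' ▸ hL
    exact (hb.trans_le (min_le_left _ _)).not_ge this
  have hRc' : sSup S < c := hRc.lt_of_ne fun h' => by
    have := h' ▸ hR
    exact (hb.trans_le (min_le_right _ _)).not_ge this
  set δ := min (sInf S - a) (c - sSup S)
  have hδL : δ ≤ sInf S - a := min_le_left _ _
  have hδR : δ ≤ c - sSup S := min_le_right _ _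
  have hδ : 0 < δ := lt_min (by linarith) (by linarith)
  have hs : h (sInf S - δ + δ) < h (sInf S - δ) := by
    rw [sub_add_cancel]
    exact hL.trans_lt (hout _ ⟨by linarith, by linarith⟩ (.inl (by linarith)))
  have ht : h (sSup S) < h (sSup S + δ) :=
    hR.trans_lt (hout _ ⟨by linarith, by linarith⟩ (.inr (by linarith)))
  exact (hinc δ hδ _ _ (by linarith) hs).not_gt ht

lemma LogConcaveOn.mul_le_mul_of_le_of_le {S : Set ℝ} {g : ℝ → ℝ} (hg : LogConcaveOn S g)
    {a b c d : ℝ} (ha : a ∈ S) (hd : d ∈ S) (hab : a ≤ b) (hbd : b ≤ d) (h : a + d = b + c) :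
    g a * g d ≤ g b * g c := by
  rcases (hab.trans hbd).eq_or_lt with had | had
  · rw [show b = a by linarith, show c = a by linarith, show d = a by linarith]
  have hda : 0 < d - a := sub_pos.2 had
  set l := (d - b) / (d - a)
  have hl0 : 0 ≤ l := div_nonneg (sub_nonneg.2 hbd) hda.le
  have hl1 : l ≤ 1 := (div_le_one hda).2 (by linarith)
  have hb : l * a + (1 - l) * d = b := by
    simp only [l]
    field_simp
    ring
  have hc : (1 - l) * a + (1 - (1 - l)) * d = c := by
    simp only [l]
    rw [show c = a + d - b by linarith]
    field_simp
    ring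
  have h₁ := hg.2 a ha d hd l hl0 hl1
  have h₂ := hg.2 a ha d hd (1 - l) (by linarith) (by linarith)
  rw [hb] at h₁
  rw [hc, sub_sub_cancel] at h₂
  have hsplit : ∀ x : ℝ, 0 ≤ x → x ^ l * x ^ (1 - l) = x := fun x hx => by
    rw [← Real.rpow_add' hx (by rw [add_sub_cancel]; exact one_ne_zero), add_sub_cancel,
      Real.rpow_one]
  have ga := hg.1 a ha
  have gd := hg.1 d hd
  calc g a * g d = (g a ^ l * g a ^ (1 - l)) * (g d ^ l * g d ^ (1 - l)) := by
        rw [hsplit _ ga, hsplit _ gd]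
    _ = (g a ^ l * g d ^ (1 - l)) * (g a ^ (1 - l) * g d ^ l) := by ring
    _ ≤ g b * g c :=
        mul_le_mul h₁ h₂ (mul_nonneg (Real.rpow_nonneg ga _) (Real.rpow_nonneg gd _))
          ((mul_nonneg (Real.rpow_nonneg ga _) (Real.rpow_nonneg gd _)).trans h₁)

section Convolution

variable {g g' u v : ℝ → ℝ}

lemma integrable_conv_integrand (hg : Integrable g) (hu : MemLp u ⊤) (t : ℝ) :
    Integrable (fun τ => g (t - τ) * u τ) :=
  ((integrable_comp_sub_left g t).2 hg).mul_of_top_left hu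

lemma conv_sub_conv_left (hg : Integrable g) (hg' : Integrable g') (hu : MemLp u ⊤) (t : ℝ) :
    conv g u t - conv g' u t = conv (g - g') u t := by
  rw [conv, conv, ← integral_sub (integrable_conv_integrand hg hu t)
    (integrable_conv_integrand hg' hu t)]
  simp only [conv, Pi.sub_apply, sub_mul]

lemma conv_sub_conv_right (hg : Integrable g) (hu : MemLp u ⊤) (hv : MemLp v ⊤) (t : ℝ) :
    conv g u t - conv g v t = conv g (u - v) t := by
  rw [conv, conv, ← integral_sub (integrable_conv_integrand hg hu t)
    (integrable_conv_integrand hg hv t)]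
  simp only [conv, Pi.sub_apply, mul_sub]

lemma conv_comp_add_right (g u : ℝ → ℝ) (δ t : ℝ) :
    conv g (fun τ => u (τ + δ)) t = conv g u (t + δ) := by
  conv_rhs => rw [conv, ← integral_add_right_eq_self _ δ]
  simp only [conv, add_sub_add_right_eq_sub]

lemma conv_nonneg (hg : ∀ x, 0 ≤ g x) (hu : ∀ τ, 0 ≤ u τ) (t : ℝ) : 0 ≤ conv g u t :=
  integral_nonneg fun τ => mul_nonneg (hg _) (hu τ)

lemma abs_conv_le (hg : Integrable g) {C : ℝ} (hC : ∀ τ, |u τ| ≤ C) (t : ℝ) :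
    |conv g u t| ≤ (∫ x, |g x|) * C :=
  calc |conv g u t| ≤ ∫ τ, |g (t - τ)| * C :=
        norm_integral_le_of_norm_le (((integrable_comp_sub_left g t).2 hg).abs.mul_const C)
          (ae_of_all _ fun τ => by
            rw [Real.norm_eq_abs, abs_mul]
            exact mul_le_mul_of_nonneg_left (hC τ) (abs_nonneg _))
    _ = (∫ x, |g x|) * C := by
        rw [integral_mul_const, integral_sub_left_eq_self (fun x => |g x|)]

/-- Approximate `g` in `L¹` by continuous compactly supported `g'`: then `g' ∗ u` is continuous
and uniformly close to `g ∗ u`. -/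
lemma continuous_conv (hg : Integrable g) (hu : AEStronglyMeasurable u) {C : ℝ}
    (hC : ∀ τ, |u τ| ≤ C) : Continuous (conv g u) := by
  have hu' : MemLp u ⊤ := memLp_top_of_bound hu C (ae_of_all _ hC)
  have hC0 : 0 ≤ C := (abs_nonneg _).trans (hC 0)
  refine continuous_of_uniform_approx_of_continuous fun U hU => ?_
  obtain ⟨ε, hε, hεU⟩ := Metric.mem_uniformity_dist.1 hU
  obtain ⟨g', hg'supp, hg'near, hg'cont, hg'int⟩ :=
    hg.exists_hasCompactSupport_integral_sub_le (ε := ε / (C + 1)) (by positivity)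
  refine ⟨conv g' u, ?_, fun t => hεU ?_⟩
  · have : conv g' u = convolution g' u (ContinuousLinearMap.mul ℝ ℝ) volume :=
      funext fun t => convolution_mul_swap.symm
    rw [this]
    exact hg'supp.continuous_convolution_left _ hg'cont (hu'.locallyIntegrable le_top)
  · rw [Real.dist_eq, conv_sub_conv_left hg hg'int hu']
    calc |conv (g - g') u t| ≤ (∫ x, |g x - g' x|) * C := abs_conv_le (hg.sub hg'int) hC t
      _ ≤ ε / (C + 1) * C := mul_le_mul_of_nonneg_right hg'near hC0
      _ < ε := by
        rw [div_mul_eq_mul_div, div_lt_iff₀ (by positivity)]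
        nlinarith

/-- Integrate the TP₂ inequality for `g` against `p σ * m σ'`, which vanishes unless `σ ≤ σ'`. -/
lemma LogConcaveOn.conv_mul_conv_le (hg_int : Integrable g) (hg : LogConcaveOn univ g)
    {p m : ℝ → ℝ} (hp : MemLp p ⊤) (hm : MemLp m ⊤) (hp0 : ∀ σ, 0 ≤ p σ) (hm0 : ∀ σ, 0 ≤ m σ)
    (hpm : ∀ σ σ', 0 < p σ → 0 < m σ' → σ ≤ σ') {s t : ℝ} (hst : s ≤ t) :
    conv g p t * conv g m s ≤ conv g p s * conv g m t := by
  simp only [conv]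
  rw [← integral_prod_mul, ← integral_prod_mul]
  refine integral_mono ((integrable_conv_integrand hg_int hp t).mul_prod
    (integrable_conv_integrand hg_int hm s)) ((integrable_conv_integrand hg_int hp s).mul_prod
    (integrable_conv_integrand hg_int hm t)) fun ⟨σ, σ'⟩ => ?_
  dsimp only
  rcases le_or_gt σ σ' with hσ | hσ
  · have htp := hg.mul_le_mul_of_le_of_le (mem_univ (s - σ')) (mem_univ (t - σ))
      (by linarith) (by linarith) (by ring : s - σ' + (t - σ) = s - σ + (t - σ'))
    calc g (t - σ) * p σ * (g (s - σ') * m σ')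
        = g (s - σ') * g (t - σ) * (p σ * m σ') := by ring
      _ ≤ g (s - σ) * g (t - σ') * (p σ * m σ') :=
          mul_le_mul_of_nonneg_right htp (mul_nonneg (hp0 σ) (hm0 σ'))
      _ = g (s - σ) * p σ * (g (t - σ') * m σ') := by ring
  · have : p σ = 0 ∨ m σ' = 0 := by
      by_contra! h
      exact hσ.not_ge (hpm σ σ' ((hp0 σ).lt_of_ne' h.1) ((hm0 σ').lt_of_ne' h.2))
    rcases this with h | h <;> simp [h]

lemma LogConcaveOn.conv_nonpos_of_neg (hg_int : Integrable g) (hg : LogConcaveOn univ g)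
    {ψ : ℝ → ℝ} (hψ : MemLp ψ ⊤) (hψ_sign : ∀ σ σ', 0 < ψ σ → ψ σ' < 0 → σ ≤ σ')
    {s t : ℝ} (hst : s ≤ t) (hs : conv g ψ s < 0) : conv g ψ t ≤ 0 := by
  set p := fun σ => max (ψ σ) 0
  set m := fun σ => max (-ψ σ) 0
  have hψpm : ψ = p - m := funext fun σ => (max_zero_sub_max_neg_zero_eq_self (ψ σ)).symm
  have hp0 : ∀ σ, 0 ≤ p σ := fun σ => le_max_right _ _
  have hm0 : ∀ σ, 0 ≤ m σ := fun σ => le_max_right _ _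
  have hg0 : ∀ x, 0 ≤ g x := fun x => hg.1 x (mem_univ x)
  have hcross := hg.conv_mul_conv_le hg_int hψ.pos_part hψ.neg_part hp0 hm0
    (fun σ σ' h h' => hψ_sign σ σ' (by simpa [p] using h) (by simpa [m] using h')) hst
  rw [hψpm, ← conv_sub_conv_right hg_int hψ.pos_part hψ.neg_part] at hs ⊢
  -- `(g ∗ p) s < (g ∗ m) s` and `(g ∗ m) t < (g ∗ p) t` would contradict `hcross`
  nlinarith [conv_nonneg hg0 hp0 s, conv_nonneg hg0 hp0 t, conv_nonneg hg0 hm0 t]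

lemma conv_add_le_of_conv_add_lt (hg_int : Integrable g) (hg : LogConcaveOn univ g)
    (hu : MemLp u ⊤) (hu_qc : Quasiconcave u) {δ s t : ℝ} (hδ : 0 ≤ δ) (hst : s ≤ t)
    (hs : conv g u (s + δ) < conv g u s) : conv g u (t + δ) ≤ conv g u t := by
  have hu_δ : MemLp (fun σ => u (σ + δ)) ⊤ :=
    hu.comp_measurePreserving (measurePreserving_add_right volume δ)
  have hincr : ∀ x, conv g u (x + δ) - conv g u x = conv g ((fun σ => u (σ + δ)) - u) x :=
    fun x => by rw [← conv_comp_add_right, conv_sub_conv_right hg_int hu_δ hu]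
  have hsign : ∀ σ σ', 0 < ((fun σ => u (σ + δ)) - u) σ → ((fun σ => u (σ + δ)) - u) σ' < 0 →
      σ ≤ σ' := by
    intro σ σ' h h'
    simp only [Pi.sub_apply, sub_pos, sub_neg] at h h'
    by_contra! hσ
    exact h'.not_ge (hu_qc.le_add_of_le_of_lt_add hδ hσ.le h)
  have := hg.conv_nonpos_of_neg hg_int (hu_δ.sub hu) hsign hst (by linarith [hincr s])
  linarith [hincr t]

end Convolution

theorem serial_interconnection_strongly_unimodal_general (g u f : ℝ → ℝ)
    (hg_int : Integrable g) (hg : LogConcaveOn Set.univ g)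
    (hu_bdd : ∃ C : ℝ, ∀ t, |u t| ≤ C)
    (hu_meas : Measurable u) (hu_qc : Quasiconcave u)
    (hf : Monotone f) :
    Quasiconcave (fun t => f (conv g u t)) := by
  obtain ⟨C, hC⟩ := hu_bdd
  have hu : MemLp u ⊤ := memLp_top_of_bound hu_meas.aestronglyMeasurable C (ae_of_all _ hC)
  have hconv_cont : Continuous (conv g u) := continuous_conv hg_int hu_meas.aestronglyMeasurable hC
  have hconv_qc : Quasiconcave (conv g u) :=
    hconv_cont.quasiconcave_of_increment_nonpos_of_neg fun δ hδ s t hst hs =>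
      conv_add_le_of_conv_add_lt hg_int hg hu hu_qc hδ.le hst hs
  exact hf.comp_quasiconcave hconv_qc

/-- Serial interconnection of a strongly unimodal LTI system (log-concave
integrable impulse response `g`) with a static monotone nonlinearity `f` maps
quasiconcave inputs to quasiconcave outputs. -/
theorem serial_interconnection_strongly_unimodal (g u f : ℝ → ℝ)
    (hg_int : Integrable g) (hg : LogConcaveOn Set.univ g)
    (hu_nonneg : ∀ t, 0 ≤ u t) (hu_bdd : ∃ C : ℝ, ∀ t, |u t| ≤ C)
    (hu_meas : Measurable u) (hu_qc : Quasiconcave u)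
    (hf : Monotone f) :
    Quasiconcave (fun t => f (conv g u t)) :=
  serial_interconnection_strongly_unimodal_general g u f hg_int hg hu_bdd hu_meas hu_qc hf
end

section
/- Let m, k, β > 0 with β² > 4k, set p = √(β² − 4k), and define the impulse response of the overdamped mass-spring-damper system by g(t) = (m/p)(e^{−(β−p)t/2} − e^{−(β+p)t/2}). Then g(t) ≥ 0 and g'(t)² − g(t)·g''(t) ≥ 0 for all t ≥ 0; hence g is log-concave on [0,∞) and the overdamped mass-spring-damper system is strongly unimodal. -/
open Real Set

theorem LogConcaveOn.mul {S : Set ℝ} {f g : ℝ → ℝ} (hf : LogConcaveOn S f)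
    (hg : LogConcaveOn S g) : LogConcaveOn S (fun x => f x * g x) := by
  refine ⟨fun x hx => mul_nonneg (hf.1 x hx) (hg.1 x hx), fun x hx y hy l hl0 hl1 => ?_⟩
  have hfl := hf.2 x hx y hy l hl0 hl1
  have hf₀ : 0 ≤ f x ^ l * f y ^ (1 - l) :=
    mul_nonneg (rpow_nonneg (hf.1 x hx) _) (rpow_nonneg (hf.1 y hy) _)
  have hg₀ : 0 ≤ g x ^ l * g y ^ (1 - l) :=
    mul_nonneg (rpow_nonneg (hg.1 x hx) _) (rpow_nonneg (hg.1 y hy) _)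
  calc (f x * g x) ^ l * (f y * g y) ^ (1 - l)
      = (f x ^ l * f y ^ (1 - l)) * (g x ^ l * g y ^ (1 - l)) := by
        rw [mul_rpow (hf.1 x hx) (hg.1 x hx), mul_rpow (hf.1 y hy) (hg.1 y hy)]
        ring
    _ ≤ f (l * x + (1 - l) * y) * g (l * x + (1 - l) * y) :=
        mul_le_mul hfl (hg.2 x hx y hy l hl0 hl1) hg₀ (hf₀.trans hfl)

theorem ConcaveOn.logConcaveOn {S : Set ℝ} {f : ℝ → ℝ} (hf : ConcaveOn ℝ S f)
    (hf₀ : ∀ x ∈ S, 0 ≤ f x) : LogConcaveOn S f :=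
  ⟨hf₀, fun x hx y hy _ hl0 hl1 =>
    (geom_mean_le_arith_mean2_weighted hl0 (sub_nonneg.2 hl1) (hf₀ x hx) (hf₀ y hy)
      (add_sub_cancel _ _)).trans (hf.2 hx hy hl0 (sub_nonneg.2 hl1) (add_sub_cancel _ _))⟩

theorem ConcaveOn.logConcaveOn_exp {S : Set ℝ} {f : ℝ → ℝ} (hf : ConcaveOn ℝ S f) :
    LogConcaveOn S (fun x => exp (f x)) := by
  refine ⟨fun x _ => (exp_pos _).le, fun x hx y hy l hl0 hl1 => ?_⟩
  rw [← exp_mul, ← exp_mul, ← exp_add, exp_le_exp, mul_comm (f x), mul_comm (f y)]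
  exact hf.2 hx hy hl0 (sub_nonneg.2 hl1) (add_sub_cancel _ _)

noncomputable def biexp (u v a b t : ℝ) : ℝ := u * exp (a * t) + v * exp (b * t)

section biexp

variable (u v a b : ℝ)

theorem hasDerivAt_biexp (t : ℝ) :
    HasDerivAt (biexp u v a b) (biexp (u * a) (v * b) a b t) t := by
  have hexp (r : ℝ) : HasDerivAt (fun t => exp (r * t)) (exp (r * t) * r) t := by
    simpa using ((hasDerivAt_id t).const_mul r).exp
  exact (((hexp a).const_mul u).add ((hexp b).const_mul v)).congr_deriv (by rw [biexp]; ring)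

theorem deriv_biexp : deriv (biexp u v a b) = biexp (u * a) (v * b) a b :=
  funext fun t => (hasDerivAt_biexp u v a b t).deriv

theorem deriv_sq_sub_mul_deriv_deriv_biexp (t : ℝ) :
    deriv (biexp u v a b) t ^ 2 - biexp u v a b t * deriv (deriv (biexp u v a b)) t =
      -(u * v) * (a - b) ^ 2 * exp ((a + b) * t) := by
  simp only [deriv_biexp, biexp, add_mul, exp_add]
  ring

theorem biexp_eq_exp_mul (t : ℝ) :
    biexp u v a b t = exp (a * t) * (u + v * exp ((b - a) * t)) := by
  rw [biexp, sub_mul, exp_sub]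
  field_simp

variable {u v a b}

theorem deriv_sq_sub_mul_deriv_deriv_biexp_nonneg (huv : u * v ≤ 0) (t : ℝ) :
    0 ≤ deriv (biexp u v a b) t ^ 2 - biexp u v a b t * deriv (deriv (biexp u v a b)) t := by
  rw [deriv_sq_sub_mul_deriv_deriv_biexp]
  have := neg_nonneg.2 huv
  positivity

theorem logConcaveOn_Ici_biexp (hv : v ≤ 0) (huv : 0 ≤ u + v) (hba : b ≤ a) :
    LogConcaveOn (Ici 0) (biexp u v a b) := by
  have hconcave : ConcaveOn ℝ univ (fun t => u + v * exp ((b - a) * t)) := by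
    have hconvex := (convexOn_exp.comp_linearMap (LinearMap.mulLeft ℝ (b - a))).smul
      (neg_nonneg.2 hv)
    refine ((concaveOn_const u convex_univ).add hconvex.neg).congr fun t _ => ?_
    simp
  have hnonneg (t : ℝ) (ht : t ∈ Ici 0) : 0 ≤ u + v * exp ((b - a) * t) := by
    have : exp ((b - a) * t) ≤ 1 :=
      exp_le_one_iff.2 (mul_nonpos_of_nonpos_of_nonneg (by linarith) ht)
    nlinarith
  rw [show biexp u v a b = _ from funext (biexp_eq_exp_mul u v a b)]
  exact ((LinearMap.mulLeft ℝ a).concaveOn (convex_Ici 0)).logConcaveOn_exp.mul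
    ((hconcave.subset (subset_univ _) (convex_Ici 0)).logConcaveOn hnonneg)

end biexp

theorem overdamped_msd_strongly_unimodal_general (m k β : ℝ)
    (hm : 0 < m) (hover : β ^ 2 > 4 * k) :
    let p : ℝ := Real.sqrt (β ^ 2 - 4 * k)
    let g : ℝ → ℝ := fun t =>
      m / p * (Real.exp (-(β - p) * t / 2) - Real.exp (-(β + p) * t / 2))
    (∀ t : ℝ, 0 ≤ t → 0 ≤ g t) ∧
      (∀ t : ℝ, 0 ≤ t → 0 ≤ deriv g t ^ 2 - g t * deriv (deriv g) t) ∧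
      LogConcaveOn (Set.Ici 0) g := by
  intro p g
  have hp : 0 < p := sqrt_pos.2 (by linarith)
  have hc : 0 < m / p := div_pos hm hp
  have hv : -(m / p) ≤ 0 := neg_nonpos.2 hc.le
  have hg : g = biexp (m / p) (-(m / p)) (-(β - p) / 2) (-(β + p) / 2) := by
    funext t
    simp only [g, biexp]
    ring_nf
  have hlc : LogConcaveOn (Ici 0) g :=
    hg ▸ logConcaveOn_Ici_biexp hv (add_neg_cancel _).ge (by linarith)
  refine ⟨hlc.1, fun t _ => ?_, hlc⟩
  rw [hg]
  exact deriv_sq_sub_mul_deriv_deriv_biexp_nonneg (mul_nonpos_of_nonneg_of_nonpos hc.le hv) t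

/-- The overdamped mass-spring-damper system (`β² > 4k`) has a nonnegative
impulse response `g(t) = (m/p)(e^{−(β−p)t/2} − e^{−(β+p)t/2})` with
`p = √(β² − 4k)`, satisfying the test `g'² − g·g'' ≥ 0` on `[0,∞)`; hence `g`
is log-concave on `[0,∞)` and the system is strongly unimodal. -/
theorem overdamped_msd_strongly_unimodal (m k β : ℝ)
    (hm : 0 < m) (hk : 0 < k) (hβ : 0 < β) (hover : β ^ 2 > 4 * k) :
    let p : ℝ := Real.sqrt (β ^ 2 - 4 * k)
    let g : ℝ → ℝ := fun t =>
      m / p * (Real.exp (-(β - p) * t / 2) - Real.exp (-(β + p) * t / 2))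
    (∀ t : ℝ, 0 ≤ t → 0 ≤ g t) ∧
      (∀ t : ℝ, 0 ≤ t → 0 ≤ deriv g t ^ 2 - g t * deriv (deriv g) t) ∧
      LogConcaveOn (Set.Ici 0) g :=
  overdamped_msd_strongly_unimodal_general m k β hm hover
end
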